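/- arXiv:2109.07800 — 2 statements merged into one kernel-verified Lean document; each statement's English description precedes it below -/
import Mathlib

section
/- Assume |W| ≤ K almost surely and θ_0 = sup{θ ≥ 0 : E[e^{θτ}] < ∞} < ∞. Then for every β > 0, m ∈ ℝ, and α ∈ (0,1], one has β Λ*(α/β, m/β) + (1−α) θ_0 ≥ β Λ*(1/β, m/β), where Λ* is the Legendre transform of (x,y) ↦ log E[e^{xτ + yW}]. Consequently inf_{α∈(0,1]} { β Λ*(α/β, m/β) + (1−α) θ_0 } = β Λ*(1/β, m/β). -/
open MeasureTheory Filter Real Set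

noncomputable def elog (x : ENNReal) : EReal :=
  if x = 0 then ⊥ else if x = ⊤ then ⊤ else ((Real.log x.toReal : ℝ) : EReal)

/-! Beyond the abscissa of convergence `θ₀` of `E[e^{θτ}]` the cumulant generating function `Λ`
is `+∞`, because the bounded `W` changes `e^{xτ}` by at most the factor `e^{±|y|K}`. Hence in the
Legendre transform only `x ≤ θ₀` matter, and for those decreasing the first slope from `1/β` to
`α/β` costs at most `(1 - α) θ₀ / β`. -/

@[simp]
lemma elog_top : elog ⊤ = ⊤ := by
  simp [elog]

noncomputable def legendreTransform (L : ℝ → ℝ → EReal) (a b : ℝ) : EReal :=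
  ⨆ p : ℝ × ℝ, (((a * p.1 + b * p.2 : ℝ) : EReal) - L p.1 p.2)

lemma legendreTransform_le_add_of_eq_top {L : ℝ → ℝ → EReal} {c : ℝ}
    (hL : ∀ x y, c < x → L x y = ⊤) {a a' : ℝ} (ha : a ≤ a') (b : ℝ) :
    legendreTransform L a' b ≤ legendreTransform L a b + (((a' - a) * c : ℝ) : EReal) := by
  refine iSup_le fun p => ?_
  rcases le_or_gt p.1 c with hp | hp
  · have hslope : a' * p.1 + b * p.2 ≤ (a * p.1 + b * p.2) + (a' - a) * c := by
      nlinarith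
    calc ((a' * p.1 + b * p.2 : ℝ) : EReal) - L p.1 p.2
        ≤ (((a * p.1 + b * p.2) + (a' - a) * c : ℝ) : EReal) - L p.1 p.2 :=
          EReal.sub_le_sub (EReal.coe_le_coe_iff.2 hslope) le_rfl
      _ = (((a * p.1 + b * p.2 : ℝ) : EReal) - L p.1 p.2) + (((a' - a) * c : ℝ) : EReal) := by
          rw [EReal.coe_add, sub_eq_add_neg, sub_eq_add_neg, add_right_comm, ← sub_eq_add_neg]
      _ ≤ legendreTransform L a b + (((a' - a) * c : ℝ) : EReal) :=
          add_le_add_left (le_iSup (fun q : ℝ × ℝ =>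
            (((a * q.1 + b * q.2 : ℝ) : EReal) - L q.1 q.2)) p) _
  · rw [hL p.1 p.2 hp, EReal.sub_top]
    exact bot_le

lemma lintegral_exp_mul_eq_top_of_isLUB {Ω : Type*} [MeasurableSpace Ω] {μ : Measure Ω}
    {τ : Ω → ℝ} {θ₀ x : ℝ}
    (hθ₀ : IsLUB {θ : ℝ | 0 ≤ θ ∧ ∫⁻ ω, ENNReal.ofReal (exp (θ * τ ω)) ∂μ < ⊤} θ₀)
    (hx : θ₀ < x) :
    ∫⁻ ω, ENNReal.ofReal (exp (x * τ ω)) ∂μ = ⊤ := by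
  -- `ℝ` has no bottom, so the set is nonempty and `0 ≤ θ ≤ θ₀ < x` for some member `θ`.
  obtain ⟨θ, hθ⟩ := hθ₀.nonempty
  by_contra hfin
  exact hx.not_ge (hθ₀.1 ⟨hθ.1.trans ((hθ₀.1 hθ).trans hx.le), lt_top_iff_ne_top.2 hfin⟩)

lemma lintegral_exp_add_mul_eq_top {Ω : Type*} [MeasurableSpace Ω] {μ : Measure Ω}
    {f g : Ω → ℝ} {K : ℝ} (hg : ∀ᵐ ω ∂μ, |g ω| ≤ K)
    (hf : ∫⁻ ω, ENNReal.ofReal (exp (f ω)) ∂μ = ⊤) (y : ℝ) :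
    ∫⁻ ω, ENNReal.ofReal (exp (f ω + y * g ω)) ∂μ = ⊤ := by
  have hlower : ∫⁻ ω, ENNReal.ofReal (exp (-(|y| * K))) * ENNReal.ofReal (exp (f ω)) ∂μ
      ≤ ∫⁻ ω, ENNReal.ofReal (exp (f ω + y * g ω)) ∂μ := by
    refine lintegral_mono_ae ?_
    filter_upwards [hg] with ω hω
    rw [← ENNReal.ofReal_mul (exp_pos _).le, ← exp_add]
    refine ENNReal.ofReal_le_ofReal (exp_le_exp.2 ?_)
    have : |y * g ω| ≤ |y| * K := by
      rw [abs_mul]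
      exact mul_le_mul_of_nonneg_left hω (abs_nonneg y)
    linarith [neg_abs_le (y * g ω)]
  rwa [lintegral_const_mul' _ _ ENNReal.ofReal_ne_top, hf,
    ENNReal.mul_top (ENNReal.ofReal_pos.2 (exp_pos _)).ne', top_le_iff] at hlower

theorem inf_alpha_beta_cramer_general
    {Ω : Type*} [MeasurableSpace Ω] (μ : Measure Ω)
    (τ W : Ω → ℝ)
    (K : ℝ) (hWbd : ∀ᵐ ω ∂μ, |W ω| ≤ K)
    (θ₀ : ℝ)
    (hθ₀ : IsLUB {θ : ℝ | 0 ≤ θ ∧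
      ∫⁻ ω, ENNReal.ofReal (Real.exp (θ * τ ω)) ∂μ < ⊤} θ₀)
    (Λ : ℝ → ℝ → EReal)
    (hΛ : ∀ x y, Λ x y = elog (∫⁻ ω, ENNReal.ofReal (Real.exp (x * τ ω + y * W ω)) ∂μ))
    (Λstar : ℝ → ℝ → EReal)
    (hΛstar : ∀ a b, Λstar a b = ⨆ p : ℝ × ℝ, (((a * p.1 + b * p.2 : ℝ) : EReal) - Λ p.1 p.2))
    (β m : ℝ) (hβ : 0 < β) :
    (∀ α ∈ Set.Ioc (0:ℝ) 1,
      (β : EReal) * Λstar (α / β) (m / β) + (((1 - α) * θ₀ : ℝ) : EReal)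
        ≥ (β : EReal) * Λstar (1 / β) (m / β)) ∧
    (⨅ α ∈ Set.Ioc (0:ℝ) 1,
        ((β : EReal) * Λstar (α / β) (m / β) + (((1 - α) * θ₀ : ℝ) : EReal)))
      = (β : EReal) * Λstar (1 / β) (m / β) := by
  have hΛ_top : ∀ x y, θ₀ < x → Λ x y = ⊤ := fun x y hx => by
    rw [hΛ, lintegral_exp_add_mul_eq_top hWbd (lintegral_exp_mul_eq_top_of_isLUB hθ₀ hx), elog_top]
  have hΛstar_eq : Λstar = legendreTransform Λ := funext₂ hΛstar
  have key : ∀ α ∈ Set.Ioc (0:ℝ) 1,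
      (β : EReal) * Λstar (1 / β) (m / β)
        ≤ (β : EReal) * Λstar (α / β) (m / β) + (((1 - α) * θ₀ : ℝ) : EReal) := by
    rintro α ⟨-, hα1⟩
    have hβ' : (0 : EReal) ≤ β := EReal.coe_nonneg.2 hβ.le
    calc (β : EReal) * Λstar (1 / β) (m / β)
        ≤ β * (Λstar (α / β) (m / β) + (((1 / β - α / β) * θ₀ : ℝ) : EReal)) := by
          rw [hΛstar_eq]
          exact mul_le_mul_of_nonneg_left (legendreTransform_le_add_of_eq_top hΛ_top
            (div_le_div_of_nonneg_right hα1 hβ.le) _) hβ'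
      _ = β * Λstar (α / β) (m / β) + (((1 - α) * θ₀ : ℝ) : EReal) := by
          rw [EReal.left_distrib_of_nonneg_of_ne_top hβ' (EReal.coe_ne_top β), ← EReal.coe_mul]
          congr 2
          field_simp
  refine ⟨key, le_antisymm ?_ (le_iInf₂ key)⟩
  calc (⨅ α ∈ Set.Ioc (0:ℝ) 1,
        ((β : EReal) * Λstar (α / β) (m / β) + (((1 - α) * θ₀ : ℝ) : EReal)))
      ≤ (β : EReal) * Λstar (1 / β) (m / β) + (((1 - 1) * θ₀ : ℝ) : EReal) :=
        iInf₂_le 1 ⟨zero_lt_one, le_rfl⟩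
    _ = (β : EReal) * Λstar (1 / β) (m / β) := by simp

/-- If `|W| ≤ K` a.s. and `θ₀ = sup {θ ≥ 0 : E[e^{θτ}] < ∞} < ∞`, then for every
`β > 0`, `m ∈ ℝ` and `α ∈ (0,1]`,
`β Λ*(α/β, m/β) + (1−α) θ₀ ≥ β Λ*(1/β, m/β)`, and consequently
`inf_{α ∈ (0,1]} (β Λ*(α/β, m/β) + (1−α) θ₀) = β Λ*(1/β, m/β)`. -/
theorem inf_alpha_beta_cramer
    {Ω : Type*} [MeasurableSpace Ω] (μ : Measure Ω) [IsProbabilityMeasure μ]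
    (τ W : Ω → ℝ) (hτ : Measurable τ) (hW : Measurable W)
    (hτpos : ∀ᵐ ω ∂μ, 0 < τ ω)
    (K : ℝ) (hK : 0 < K) (hWbd : ∀ᵐ ω ∂μ, |W ω| ≤ K)
    (θ₀ : ℝ)
    (hθ₀ : IsLUB {θ : ℝ | 0 ≤ θ ∧
      ∫⁻ ω, ENNReal.ofReal (Real.exp (θ * τ ω)) ∂μ < ⊤} θ₀)
    (Λ : ℝ → ℝ → EReal)
    (hΛ : ∀ x y, Λ x y = elog (∫⁻ ω, ENNReal.ofReal (Real.exp (x * τ ω + y * W ω)) ∂μ))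
    (Λstar : ℝ → ℝ → EReal)
    (hΛstar : ∀ a b, Λstar a b = ⨆ p : ℝ × ℝ, (((a * p.1 + b * p.2 : ℝ) : EReal) - Λ p.1 p.2))
    (β m : ℝ) (hβ : 0 < β) :
    (∀ α ∈ Set.Ioc (0:ℝ) 1,
      (β : EReal) * Λstar (α / β) (m / β) + (((1 - α) * θ₀ : ℝ) : EReal)
        ≥ (β : EReal) * Λstar (1 / β) (m / β)) ∧
    (⨅ α ∈ Set.Ioc (0:ℝ) 1,
        ((β : EReal) * Λstar (α / β) (m / β) + (((1 - α) * θ₀ : ℝ) : EReal)))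
      = (β : EReal) * Λstar (1 / β) (m / β) :=
  inf_alpha_beta_cramer_general μ τ W K hWbd θ₀ hθ₀ Λ hΛ Λstar hΛstar β m hβ
end

section
/- Suppose θ_0 = sup{θ≥0 : E[e^{θτ}]<∞} > 0 and η_0 = sup{η≥0 : E[e^{η|W|}]<∞} > 0, W^n = max(min(W, n), −n), Z_t = Σ_{i=1}^{M_t} W_i and Z_t^n = Σ_{i=1}^{M_t} W_i^n. Then for all δ > 0, lim_{n→∞} limsup_{t→∞} (1/t) log P(|Z_t/t − Z_t^n/t| > 2δ) ≤ −η_0 δ / 2. -/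
open MeasureTheory ProbabilityTheory Filter Real Set

/-!
Since `|W - Wⁿ| ≤ (|W| - n)₊`, on the event `|Z_t - Zⁿ_t| > 2δt` the excesses `(|W_i| - n)₊`,
`i < M_t`, sum to more than `2δt`. Fix `a ≥ 0` and `m = ⌈at⌉`. Either `M_t ≥ m`, so that
`S_m ≤ t`, an event of probability at most `e^{θt} E[e^{-θτ}]^m` by Chernoff, i.e. of rate
`θ + a log E[e^{-θτ}]`, which tends to `-∞` with `a` because `τ > 0`; or the first `m` excesses
alone exceed `2δt`, of probability at most `e^{-2ηδt} E[e^{η(|W| - n)₊}]^m` for any `η < η₀`.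
By dominated convergence the last moment generating function tends to `1` as `n → ∞`, so the
double limit has rate at most `-2ηδ`, and letting `η ↑ η₀` gives `-2η₀δ ≤ -η₀δ/2`.
-/

open Finset Topology

lemma elog_le_log {x : ENNReal} (hx : x ≠ ⊤) {r : ℝ} (h : x.toReal ≤ r) :
    elog x ≤ (log r : EReal) := by
  by_cases h0 : x = 0
  · simp [elog, h0]
  simp only [elog, h0, hx, if_false]
  exact EReal.coe_le_coe_iff.2 (log_le_log (ENNReal.toReal_pos h0 hx) h)

lemma limsup_inv_mul_elog_le {f : ℝ → ENNReal} (hf : ∀ t, f t ≠ ⊤) {K c : ℝ} (hK : 0 < K)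
    (h : ∀ᶠ t in atTop, (f t).toReal ≤ K * exp (c * t)) :
    limsup (fun t : ℝ => ((1 / t : ℝ) : EReal) * elog (f t)) atTop ≤ c := by
  have hbound : ∀ᶠ t in atTop,
      ((1 / t : ℝ) : EReal) * elog (f t) ≤ ((log K * t⁻¹ + c : ℝ) : EReal) := by
    filter_upwards [h, eventually_gt_atTop 0] with t ht htpos
    calc ((1 / t : ℝ) : EReal) * elog (f t)
        ≤ ((1 / t : ℝ) : EReal) * (log (K * exp (c * t)) : EReal) :=
          mul_le_mul_of_nonneg_left (elog_le_log (hf t) ht)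
            (EReal.coe_nonneg.2 (by positivity))
      _ = ((log K * t⁻¹ + c : ℝ) : EReal) := by
          rw [← EReal.coe_mul, log_mul hK.ne' (exp_pos _).ne', log_exp]
          congr 1
          field_simp
  have hlim : Tendsto (fun t : ℝ => ((log K * t⁻¹ + c : ℝ) : EReal)) atTop (𝓝 c) := by
    have := (tendsto_inv_atTop_zero.const_mul (log K)).add_const c
    rw [mul_zero, zero_add] at this
    exact (continuous_coe_real_ereal.tendsto _).comp this
  exact (limsup_le_limsup hbound).trans hlim.limsup_eq.le

lemma max_abs_sub_le_abs (x : ℝ) {c : ℝ} (hc : 0 ≤ c) : max (|x| - c) 0 ≤ |x| :=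
  max_le (by linarith) (abs_nonneg x)

lemma abs_sub_max_min_le (x c : ℝ) : |x - max (min x c) (-c)| ≤ max (|x| - c) 0 := by
  grind

/-- The paper's `M_t = sup {n : S_n ≤ t}` for the path `τ`. When `S_n ≤ t` for every `n`, `sSup`
returns the junk value `0`; only `sum_range_le_of_le_renewalCount` is used below, and it holds in
that case too. -/
noncomputable def renewalCount (τ : ℕ → ℝ) (t : ℝ) : ℕ := sSup {n | ∑ i ∈ range n, τ i ≤ t}

lemma sum_range_le_of_le_renewalCount {τ : ℕ → ℝ} (hτ : ∀ i, 0 ≤ τ i) {t : ℝ} (ht : 0 ≤ t)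
    {m : ℕ} (hm : m ≤ renewalCount τ t) : ∑ i ∈ range m, τ i ≤ t := by
  have hmono : Monotone fun n => ∑ i ∈ range n, τ i := fun k l hkl =>
    sum_le_sum_of_subset_of_nonneg (range_subset_range.2 hkl) fun i _ _ => hτ i
  by_cases hb : BddAbove {n | ∑ i ∈ range n, τ i ≤ t}
  · exact (hmono hm).trans (Nat.sSup_mem ⟨0, by simpa using ht⟩ hb)
  · obtain ⟨k, hk, hmk⟩ := not_bddAbove_iff.1 hb m
    exact (hmono hmk.le).trans hk

section IID

variable {Ω : Type*} [MeasurableSpace Ω] {μ : Measure Ω} {X : ℕ → Ω → ℝ} {s : ℝ}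

lemma mgf_sum_range_of_iid (hX : ∀ i, Measurable (X i)) (hind : iIndepFun X μ)
    (hid : ∀ i, IdentDistrib (X i) (X 0) μ μ) (m : ℕ) :
    mgf (∑ i ∈ range m, X i) μ s = mgf (X 0) μ s ^ m := by
  rw [hind.mgf_sum hX, prod_congr rfl fun i _ => mgf_congr_of_identDistrib _ _ (hid i) s,
    prod_const, card_range]

lemma integrable_exp_mul_sum_range_of_iid [IsFiniteMeasure μ] (hX : ∀ i, Measurable (X i))
    (hind : iIndepFun X μ) (hid : ∀ i, IdentDistrib (X i) (X 0) μ μ)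
    (hint : Integrable (fun ω => exp (s * X 0 ω)) μ)
    (m : ℕ) : Integrable (fun ω => exp (s * (∑ i ∈ range m, X i) ω)) μ :=
  hind.integrable_exp_mul_sum hX fun i _ =>
    ((hid i).comp (measurable_const_mul s).exp).integrable_iff.2 hint

lemma measureReal_le_sum_range_le_of_iid [IsFiniteMeasure μ] (hX : ∀ i, Measurable (X i))
    (hind : iIndepFun X μ) (hid : ∀ i, IdentDistrib (X i) (X 0) μ μ) (hs : 0 ≤ s)
    (hint : Integrable (fun ω => exp (s * X 0 ω)) μ) (m : ℕ) (ε : ℝ) :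
    μ.real {ω | ε ≤ ∑ i ∈ range m, X i ω} ≤ exp (-s * ε) * mgf (X 0) μ s ^ m := by
  simpa [mgf_sum_range_of_iid hX hind hid] using measure_ge_le_exp_mul_mgf ε hs
    (integrable_exp_mul_sum_range_of_iid hX hind hid hint m)

lemma measureReal_sum_range_le_le_of_iid [IsFiniteMeasure μ] (hX : ∀ i, Measurable (X i))
    (hind : iIndepFun X μ) (hid : ∀ i, IdentDistrib (X i) (X 0) μ μ) (hs : s ≤ 0)
    (hint : Integrable (fun ω => exp (s * X 0 ω)) μ) (m : ℕ) (ε : ℝ) :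
    μ.real {ω | ∑ i ∈ range m, X i ω ≤ ε} ≤ exp (-s * ε) * mgf (X 0) μ s ^ m := by
  simpa [mgf_sum_range_of_iid hX hind hid] using measure_le_le_exp_mul_mgf ε hs
    (integrable_exp_mul_sum_range_of_iid hX hind hid hint m)

end IID

section MGF

variable {Ω : Type*} [MeasurableSpace Ω] {μ : Measure Ω} {X : Ω → ℝ} {s : ℝ}

lemma integrable_exp_mul_of_nonneg_of_nonpos [IsFiniteMeasure μ] (hXm : AEMeasurable X μ)
    (hX : ∀ᵐ ω ∂μ, 0 ≤ X ω) (hs : s ≤ 0) : Integrable (fun ω => exp (s * X ω)) μ :=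
  .of_bound (hXm.const_mul s).exp.aestronglyMeasurable 1 <| hX.mono fun ω h => by
    rw [norm_of_nonneg (exp_pos _).le, exp_le_one_iff]
    exact mul_nonpos_of_nonpos_of_nonneg hs h

lemma mgf_le_one_of_nonneg_of_nonpos [IsProbabilityMeasure μ] (hX : ∀ᵐ ω ∂μ, 0 ≤ X ω) (hs : s ≤ 0) :
    mgf X μ s ≤ 1 := by
  simpa using mgf_anti_of_nonpos (X := fun _ => 0) hX hs (by simp)

lemma mgf_lt_one_of_pos_of_neg [IsProbabilityMeasure μ] (hXm : AEMeasurable X μ)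
    (hX : ∀ᵐ ω ∂μ, 0 < X ω) (hs : s < 0) : mgf X μ s < 1 := by
  have hint := integrable_exp_mul_of_nonneg_of_nonpos hXm (hX.mono fun _ h => h.le) hs.le
  have hlt : ∀ᵐ ω ∂μ, exp (s * X ω) < 1 :=
    hX.mono fun ω h => exp_lt_one_iff.2 (mul_neg_of_neg_of_pos hs h)
  have hle : (fun ω => exp (s * X ω)) ≤ᵐ[μ] fun _ => 1 := hlt.mono fun _ h => h.le
  refine (mgf_le_one_of_nonneg_of_nonpos (hX.mono fun _ h => h.le) hs.le).lt_of_ne fun heq => ?_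
  have hae := (integral_eq_iff_of_ae_le hint (integrable_const 1) hle).1 (by simpa [mgf] using heq)
  obtain ⟨ω, hω, hω'⟩ := (hlt.and hae).exists
  exact hω.ne hω'

lemma one_le_mgf_of_nonneg [IsProbabilityMeasure μ] (hX : ∀ᵐ ω ∂μ, 0 ≤ X ω) (hs : 0 ≤ s)
    (hint : Integrable (fun ω => exp (s * X ω)) μ) : 1 ≤ mgf X μ s := by
  simpa using mgf_mono_of_nonneg (X := fun _ => 0) hX hs hint

lemma tendsto_mgf_max_abs_sub_natCast [IsProbabilityMeasure μ] (hXm : AEMeasurable X μ)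
    (hint : Integrable (fun ω => exp (s * |X ω|)) μ) (hs : 0 ≤ s) :
    Tendsto (fun n : ℕ => mgf (fun ω => max (|X ω| - n) 0) μ s) atTop (𝓝 1) := by
  have hlim : ∀ ω, Tendsto (fun n : ℕ => exp (s * max (|X ω| - n) 0)) atTop (𝓝 1) := by
    intro ω
    refine tendsto_const_nhds.congr' ?_
    filter_upwards [eventually_ge_atTop ⌈|X ω|⌉₊] with n hn
    rw [max_eq_right (sub_nonpos.2 (Nat.ceil_le.1 hn)), mul_zero, exp_zero]
  simpa [mgf] using tendsto_integral_of_dominated_convergence (fun ω => exp (s * |X ω|))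
    (fun n => by fun_prop) hint
    (fun n => ae_of_all _ fun ω => by
      rw [norm_of_nonneg (exp_pos _).le]
      gcongr
      exact max_abs_sub_le_abs _ n.cast_nonneg)
    (ae_of_all _ hlim)

end MGF

lemma pow_natCeil_le_exp_mul_log {x : ℝ} (hx₀ : 0 < x) (hx₁ : x ≤ 1) (y : ℝ) :
    x ^ ⌈y⌉₊ ≤ exp (y * log x) := by
  rw [← rpow_natCast, rpow_def_of_pos hx₀, mul_comm y]
  exact exp_le_exp.2 (mul_le_mul_of_nonpos_left (Nat.le_ceil y) (log_nonpos hx₀.le hx₁))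

lemma pow_natCeil_le_mul_exp_mul_log {x y : ℝ} (hx : 1 ≤ x) (hy : 0 ≤ y) :
    x ^ ⌈y⌉₊ ≤ x * exp (y * log x) := by
  rw [← rpow_natCast, rpow_def_of_pos (by positivity), ← exp_log (by positivity : 0 < x),
    ← exp_add, log_exp]
  exact exp_le_exp.2 (by nlinarith [Nat.ceil_lt_add_one hy, log_nonneg hx])

section RandomSum

variable {Ω : Type*} [MeasurableSpace Ω] {μ : Measure Ω} [IsProbabilityMeasure μ]
  {τ V : ℕ → Ω → ℝ}

lemma measureReal_le_sum_renewalCount_le (hτm : ∀ i, Measurable (τ i)) (hτind : iIndepFun τ μ)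
    (hτid : ∀ i, IdentDistrib (τ i) (τ 0) μ μ) (hτ : ∀ i, ∀ᵐ ω ∂μ, 0 ≤ τ i ω)
    (hVm : ∀ i, Measurable (V i)) (hVind : iIndepFun V μ)
    (hVid : ∀ i, IdentDistrib (V i) (V 0) μ μ) (hV : ∀ i ω, 0 ≤ V i ω)
    {θ η : ℝ} (hθ : 0 ≤ θ) (hη : 0 ≤ η) (hVint : Integrable (fun ω => exp (η * V 0 ω)) μ)
    {t : ℝ} (ht : 0 ≤ t) (m : ℕ) (ε : ℝ) :
    μ.real {ω | ε ≤ ∑ i ∈ range (renewalCount (τ · ω) t), V i ω} ≤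
      exp (θ * t) * mgf (τ 0) μ (-θ) ^ m + exp (-η * ε) * mgf (V 0) μ η ^ m := by
  have hsplit : ({ω | ε ≤ ∑ i ∈ range (renewalCount (τ · ω) t), V i ω} : Set Ω) ≤ᵐ[μ]
      ({ω | ∑ i ∈ range m, τ i ω ≤ t} ∪ {ω | ε ≤ ∑ i ∈ range m, V i ω} : Set Ω) := by
    filter_upwards [ae_all_iff.2 hτ] with ω hω hε
    by_cases hm : m ≤ renewalCount (τ · ω) t
    · exact Or.inl (sum_range_le_of_le_renewalCount hω ht hm)
    · exact Or.inr (hε.trans (sum_le_sum_of_subset_of_nonneg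
        (range_subset_range.2 (not_le.1 hm).le) fun i _ _ => hV i ω))
  calc _ ≤ μ.real ({ω | ∑ i ∈ range m, τ i ω ≤ t} ∪ {ω | ε ≤ ∑ i ∈ range m, V i ω}) :=
        ENNReal.toReal_mono (measure_ne_top _ _) (measure_mono_ae hsplit)
    _ ≤ _ := (measureReal_union_le _ _).trans (add_le_add ?_
        (measureReal_le_sum_range_le_of_iid hVm hVind hVid hη hVint m ε))
  simpa using measureReal_sum_range_le_le_of_iid hτm hτind hτid (neg_nonpos.2 hθ)
    (integrable_exp_mul_of_nonneg_of_nonpos (hτm 0).aemeasurable (hτ 0) (neg_nonpos.2 hθ)) m t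

lemma limsup_inv_mul_elog_measure_le (hτm : ∀ i, Measurable (τ i)) (hτind : iIndepFun τ μ)
    (hτid : ∀ i, IdentDistrib (τ i) (τ 0) μ μ) (hτ : ∀ i, ∀ᵐ ω ∂μ, 0 ≤ τ i ω)
    (hVm : ∀ i, Measurable (V i)) (hVind : iIndepFun V μ)
    (hVid : ∀ i, IdentDistrib (V i) (V 0) μ μ) (hV : ∀ i ω, 0 ≤ V i ω)
    {θ η : ℝ} (hθ : 0 ≤ θ) (hη : 0 ≤ η) (hVint : Integrable (fun ω => exp (η * V 0 ω)) μ)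
    {A : ℝ → Set Ω} {c : ℝ}
    (hA : ∀ t > 0, A t ⊆ {ω | c * t ≤ ∑ i ∈ range (renewalCount (τ · ω) t), V i ω})
    {a : ℝ} (ha : 0 ≤ a) :
    limsup (fun t : ℝ => ((1 / t : ℝ) : EReal) * elog (μ (A t))) atTop ≤
      ((max (θ + a * log (mgf (τ 0) μ (-θ))) (-(η * c) + a * log (mgf (V 0) μ η)) : ℝ) :
        EReal) := by
  set ρ := mgf (τ 0) μ (-θ)
  set E := mgf (V 0) μ η
  have hρ₀ : 0 < ρ :=
    mgf_pos (integrable_exp_mul_of_nonneg_of_nonpos (hτm 0).aemeasurable (hτ 0) (neg_nonpos.2 hθ))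
  have hρ₁ : ρ ≤ 1 := mgf_le_one_of_nonneg_of_nonpos (hτ 0) (neg_nonpos.2 hθ)
  have hE : 1 ≤ E := one_le_mgf_of_nonneg (ae_of_all _ (hV 0)) hη hVint
  refine limsup_inv_mul_elog_le (fun t => measure_ne_top _ _) (by positivity : 0 < 1 + E) ?_
  filter_upwards [eventually_gt_atTop 0] with t ht
  set c₁ := θ + a * log ρ
  set c₂ := -(η * c) + a * log E
  have h₁ : exp (c₁ * t) ≤ exp (max c₁ c₂ * t) := by gcongr; exact le_max_left _ _
  have h₂ : exp (c₂ * t) ≤ exp (max c₁ c₂ * t) := by gcongr; exact le_max_right _ _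
  calc (μ (A t)).toReal
      ≤ μ.real {ω | c * t ≤ ∑ i ∈ range (renewalCount (τ · ω) t), V i ω} :=
        measureReal_mono (hA t ht)
    _ ≤ exp (θ * t) * ρ ^ ⌈a * t⌉₊ + exp (-η * (c * t)) * E ^ ⌈a * t⌉₊ :=
        measureReal_le_sum_renewalCount_le hτm hτind hτid hτ hVm hVind hVid hV hθ hη hVint
          ht.le _ _
    _ ≤ exp (θ * t) * exp (a * t * log ρ) + exp (-η * (c * t)) * (E * exp (a * t * log E)) := by
        gcongr
        · exact pow_natCeil_le_exp_mul_log hρ₀ hρ₁ _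
        · exact pow_natCeil_le_mul_exp_mul_log hE (by positivity)
    _ = exp (c₁ * t) + E * exp (c₂ * t) := by
        rw [← exp_add, mul_left_comm, ← exp_add]
        simp only [c₁, c₂]
        ring_nf
    _ ≤ (1 + E) * exp (max c₁ c₂ * t) := by nlinarith

end RandomSum

lemma le_neg_coe_sSup_mul {L : EReal} {s : Set ENNReal} (hs : s.Nonempty) {c : ENNReal}
    (h : ∀ η ∈ s, L ≤ -((η * c : ENNReal) : EReal)) : L ≤ -((sSup s * c : ENNReal) : EReal) := by
  simp_rw [EReal.le_neg] at h ⊢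
  obtain ⟨η, hη⟩ := hs
  rw [← EReal.coe_toENNReal ((EReal.coe_ennreal_nonneg _).trans (h η hη)),
    EReal.coe_ennreal_le_coe_ennreal_iff, ENNReal.sSup_mul]
  exact iSup₂_le fun η hη =>
    EReal.toENNReal_coe (x := η * c) ▸ EReal.toENNReal_le_toENNReal (h η hη)

lemma abs_sum_sub_sum_max_min_le (w : ℕ → ℝ) (c : ℝ) (k : ℕ) :
    |∑ i ∈ range k, w i - ∑ i ∈ range k, max (min (w i) c) (-c)| ≤
      ∑ i ∈ range k, max (|w i| - c) 0 := by
  rw [← sum_sub_distrib]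
  exact (abs_sum_le_sum_abs _ _).trans (sum_le_sum fun i _ => abs_sub_max_min_le _ _)

section Truncation

variable {Ω : Type*} [MeasurableSpace Ω] {μ : Measure Ω} [IsProbabilityMeasure μ]
  {τ W : ℕ → Ω → ℝ}

lemma limsup_limsup_truncation_error_le (hτm : ∀ i, Measurable (τ i)) (hτind : iIndepFun τ μ)
    (hτid : ∀ i, IdentDistrib (τ i) (τ 0) μ μ) (hτ : ∀ i, ∀ᵐ ω ∂μ, 0 < τ i ω)
    (hWm : ∀ i, Measurable (W i)) (hWind : iIndepFun W μ)
    (hWid : ∀ i, IdentDistrib (W i) (W 0) μ μ)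
    {η : ℝ} (hη : 0 ≤ η) (hint : Integrable (fun ω => exp (η * |W 0 ω|)) μ)
    {M : ℝ → Ω → ℕ} (hM : ∀ t ω, M t ω = renewalCount (τ · ω) t)
    {Z : ℝ → Ω → ℝ} (hZ : ∀ t ω, Z t ω = ∑ i ∈ range (M t ω), W i ω)
    {Zn : ℕ → ℝ → Ω → ℝ}
    (hZn : ∀ n t ω, Zn n t ω = ∑ i ∈ range (M t ω), max (min (W i ω) n) (-(n : ℝ)))
    {δ : ℝ} (hδ : 0 ≤ δ) :
    limsup (fun n : ℕ => limsup (fun t : ℝ => ((1 / t : ℝ) : EReal) *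
        elog (μ {ω | 2 * δ < |Z t ω / t - Zn n t ω / t|})) atTop) atTop ≤
      ((-(η * (2 * δ)) : ℝ) : EReal) := by
  set ρ := mgf (τ 0) μ (-1)
  have hρ₀ : 0 < ρ := mgf_pos (integrable_exp_mul_of_nonneg_of_nonpos (hτm 0).aemeasurable
    ((hτ 0).mono fun _ h => h.le) (by norm_num))
  have hlogρ : log ρ < 0 :=
    log_neg hρ₀ (mgf_lt_one_of_pos_of_neg (hτm 0).aemeasurable (hτ 0) (by norm_num))
  set a := (1 + η * (2 * δ)) / -log ρ
  have ha : 0 ≤ a := div_nonneg (by positivity) (neg_nonneg.2 hlogρ.le)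
  have hrate : 1 + a * log ρ = -(η * (2 * δ)) := by
    simp only [a]
    field_simp [hlogρ.ne]
    ring
  set E := fun n : ℕ => mgf (fun ω => max (|W 0 ω| - n) 0) μ η
  have hbound : ∀ n : ℕ, limsup (fun t : ℝ => ((1 / t : ℝ) : EReal) *
        elog (μ {ω | 2 * δ < |Z t ω / t - Zn n t ω / t|})) atTop ≤
      ((max (-(η * (2 * δ))) (-(η * (2 * δ)) + a * log (E n)) : ℝ) : EReal) := by
    intro n
    have hVint : Integrable (fun ω => exp (η * max (|W 0 ω| - n) 0)) μ :=
      hint.mono' (by fun_prop) (ae_of_all _ fun ω => by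
        rw [norm_of_nonneg (exp_pos _).le]
        gcongr
        exact max_abs_sub_le_abs _ n.cast_nonneg)
    have hA : ∀ t > 0, {ω | 2 * δ < |Z t ω / t - Zn n t ω / t|} ⊆
        {ω | 2 * δ * t ≤ ∑ i ∈ range (renewalCount (τ · ω) t), max (|W i ω| - n) 0} := by
      intro t ht ω hω
      rw [mem_ofPred_eq, ← sub_div, abs_div, abs_of_pos ht, lt_div_iff₀ ht, hZ, hZn, hM] at hω
      exact hω.le.trans (abs_sum_sub_sum_max_min_le _ _ _)
    refine (limsup_inv_mul_elog_measure_le hτm hτind hτid (fun i => (hτ i).mono fun _ h => h.le)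
      (V := fun i ω => max (|W i ω| - n) 0) (fun i => by fun_prop)
      (hWind.comp (fun _ (x : ℝ) => max (|x| - n) 0) fun _ => by fun_prop)
      (fun i => (hWid i).comp (u := fun x : ℝ => max (|x| - n) 0) (by fun_prop))
      (fun i ω => le_max_right _ _) zero_le_one hη hVint hA ha).trans_eq (by rw [hrate])
  have hlim : Tendsto (fun n => ((max (-(η * (2 * δ))) (-(η * (2 * δ)) + a * log (E n)) : ℝ) :
      EReal)) atTop (𝓝 ((-(η * (2 * δ)) : ℝ) : EReal)) := by
    have hlogE := (tendsto_mgf_max_abs_sub_natCast (hWm 0).aemeasurable hint hη).log one_ne_zero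
    rw [log_one] at hlogE
    have h := (tendsto_const_nhds (x := -(η * (2 * δ)))).max
      ((hlogE.const_mul a).const_add (-(η * (2 * δ))))
    rw [mul_zero, add_zero, max_self] at h
    exact (continuous_coe_real_ereal.tendsto _).comp h
  exact (limsup_le_limsup (Eventually.of_forall hbound)).trans hlim.limsup_eq.le

end Truncation

theorem truncated_cumulative_exp_approx_general
    {Ω : Type*} [MeasurableSpace Ω] (μ : Measure Ω) [IsProbabilityMeasure μ]
    (τ W : ℕ → Ω → ℝ)
    (hmeas : ∀ i, Measurable (fun ω => (τ i ω, W i ω)))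
    (hindep : iIndepFun (fun i ω => (τ i ω, W i ω)) μ)
    (hident : ∀ i, IdentDistrib (fun ω => (τ i ω, W i ω)) (fun ω => (τ 0 ω, W 0 ω)) μ μ)
    (hpos : ∀ i, ∀ᵐ ω ∂μ, 0 < τ i ω)
    (η₀ : ENNReal)
    (hη₀ : η₀ = sSup {η : ENNReal | η ≠ ⊤ ∧
      ∫⁻ ω, ENNReal.ofReal (Real.exp (η.toReal * |W 0 ω|)) ∂μ < ⊤})
    (S : ℕ → Ω → ℝ) (hS : ∀ n ω, S n ω = ∑ i ∈ Finset.range n, τ i ω)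
    (M : ℝ → Ω → ℕ) (hM : ∀ t ω, M t ω = sSup {n : ℕ | S n ω ≤ t})
    (Z : ℝ → Ω → ℝ) (hZ : ∀ t ω, Z t ω = ∑ i ∈ Finset.range (M t ω), W i ω)
    (Zn : ℕ → ℝ → Ω → ℝ)
    (hZn : ∀ n t ω, Zn n t ω = ∑ i ∈ Finset.range (M t ω), max (min (W i ω) n) (-(n:ℝ))) :
    ∀ δ : ℝ, 0 < δ →
      Filter.limsup (fun n : ℕ =>
          Filter.limsup (fun t : ℝ =>
            (((1 / t : ℝ)) : EReal) *
              elog (μ {ω | 2 * δ < |Z t ω / t - Zn n t ω / t|})) atTop) atTop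
        ≤ -((η₀ : EReal) * ((δ / 2 : ℝ) : EReal)) := by
  intro δ hδ
  have hτm : ∀ i, Measurable (τ i) := fun i => measurable_fst.comp (hmeas i)
  have hWm : ∀ i, Measurable (W i) := fun i => measurable_snd.comp (hmeas i)
  have hM' : ∀ t ω, M t ω = renewalCount (τ · ω) t := by simp [hM, hS, renewalCount]
  subst hη₀
  set s := {η : ENNReal | η ≠ ⊤ ∧ ∫⁻ ω, ENNReal.ofReal (exp (η.toReal * |W 0 ω|)) ∂μ < ⊤}
  refine (le_neg_coe_sSup_mul (s := s) (c := ENNReal.ofReal (2 * δ)) ⟨0, by simp [s]⟩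
    fun η ⟨hη, hfin⟩ => ?_).trans ?_
  · have hint : Integrable (fun ω => exp (η.toReal * |W 0 ω|)) μ :=
      (lintegral_ofReal_ne_top_iff_integrable (by fun_prop)
        (ae_of_all _ fun _ => (exp_pos _).le)).1 hfin.ne
    rw [← EReal.coe_ennreal_toReal (by finiteness), ENNReal.toReal_mul,
      ENNReal.toReal_ofReal (by positivity)]
    exact limsup_limsup_truncation_error_le hτm (hindep.comp _ fun _ => measurable_fst)
      (fun i => (hident i).comp measurable_fst) hpos hWm (hindep.comp _ fun _ => measurable_snd)
      (fun i => (hident i).comp measurable_snd) ENNReal.toReal_nonneg hint hM' hZ hZn hδ.le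
  · rw [EReal.neg_le_neg_iff, EReal.coe_ennreal_mul, EReal.coe_ennreal_ofReal,
      max_eq_left (by positivity)]
    exact mul_le_mul_of_nonneg_left (EReal.coe_le_coe_iff.2 (by linarith))
      (EReal.coe_ennreal_nonneg _)

/-- If `θ₀ > 0` and `η₀ = sup{η ≥ 0 : E[e^{η|W|}] < ∞} > 0`, with
`Wⁿ = max(min(W,n),−n)`, `Z_t = ∑_{i≤M_t} W_i` and `Z_tⁿ = ∑_{i≤M_t} W_iⁿ`, then
for all `δ > 0`,
`lim_{n→∞} limsup_{t→∞} (1/t) log P(|Z_t/t − Z_tⁿ/t| > 2δ) ≤ −η₀δ/2`. -/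
theorem truncated_cumulative_exp_approx
    {Ω : Type*} [MeasurableSpace Ω] (μ : Measure Ω) [IsProbabilityMeasure μ]
    (τ W : ℕ → Ω → ℝ)
    (hmeas : ∀ i, Measurable (fun ω => (τ i ω, W i ω)))
    (hindep : iIndepFun (fun i ω => (τ i ω, W i ω)) μ)
    (hident : ∀ i, IdentDistrib (fun ω => (τ i ω, W i ω)) (fun ω => (τ 0 ω, W 0 ω)) μ μ)
    (hpos : ∀ i, ∀ᵐ ω ∂μ, 0 < τ i ω)
    (hθ₀ : ∃ θ : ℝ, 0 < θ ∧ ∫⁻ ω, ENNReal.ofReal (Real.exp (θ * τ 0 ω)) ∂μ < ⊤)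
    (η₀ : ENNReal)
    (hη₀ : η₀ = sSup {η : ENNReal | η ≠ ⊤ ∧
      ∫⁻ ω, ENNReal.ofReal (Real.exp (η.toReal * |W 0 ω|)) ∂μ < ⊤})
    (hη₀pos : 0 < η₀)
    (S : ℕ → Ω → ℝ) (hS : ∀ n ω, S n ω = ∑ i ∈ Finset.range n, τ i ω)
    (M : ℝ → Ω → ℕ) (hM : ∀ t ω, M t ω = sSup {n : ℕ | S n ω ≤ t})
    (Z : ℝ → Ω → ℝ) (hZ : ∀ t ω, Z t ω = ∑ i ∈ Finset.range (M t ω), W i ω)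
    (Zn : ℕ → ℝ → Ω → ℝ)
    (hZn : ∀ n t ω, Zn n t ω = ∑ i ∈ Finset.range (M t ω), max (min (W i ω) n) (-(n:ℝ))) :
    ∀ δ : ℝ, 0 < δ →
      Filter.limsup (fun n : ℕ =>
          Filter.limsup (fun t : ℝ =>
            (((1 / t : ℝ)) : EReal) *
              elog (μ {ω | 2 * δ < |Z t ω / t - Zn n t ω / t|})) atTop) atTop
        ≤ -((η₀ : EReal) * ((δ / 2 : ℝ) : EReal)) :=
  truncated_cumulative_exp_approx_general μ τ W hmeas hindep hident hpos η₀ hη₀ S hS M hM Z hZ Zn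
    hZn
end
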